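/- If smooth functions u, v satisfy the second-order system (2.3): u_t = v_{xx} + v u_x + u v_x and v_t = −u v² − v v_x, and also satisfy the triangular system (2.2): u_τ = u_{xx} + 2u u_x and v_τ = v_{xx} + 2u v_x (as commuting flows), then the two flows commute to first order: the characteristics P = (v_{xx} + v u_x + u v_x, −u v² − v v_x) and Q = (u_{xx} + 2u u_x, v_{xx} + 2u v_x) satisfy X_P(Q) − X_Q(P) = 0 as differential polynomials in u, v and their x-derivatives. -/

import Mathlib

/-- Characteristic of system (2.3), first component: `v_xx + v u_x + u v_x`. -/
noncomputable def P1 (u v : ℝ → ℝ) : ℝ → ℝ := fun x =>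
  deriv (deriv v) x + v x * deriv u x + u x * deriv v x

/-- Characteristic of system (2.3), second component: `−u v² − v v_x`. -/
noncomputable def P2 (u v : ℝ → ℝ) : ℝ → ℝ := fun x =>
  -(u x * (v x)^2) - v x * deriv v x

/-- Characteristic of system (2.2), first component: `u_xx + 2 u u_x`. -/
noncomputable def Q1 (u v : ℝ → ℝ) : ℝ → ℝ := fun x =>
  deriv (deriv u) x + 2 * u x * deriv u x

/-- Characteristic of system (2.2), second component: `v_xx + 2 u v_x`. -/
noncomputable def Q2 (u v : ℝ → ℝ) : ℝ → ℝ := fun x =>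
  deriv (deriv v) x + 2 * u x * deriv v x

private lemma infDiff {f : ℝ → ℝ} (hf : ContDiff ℝ ((⊤ : ℕ∞) : WithTop ℕ∞) f) :
    Differentiable ℝ f :=
  hf.differentiable (by simp)

private lemma infDeriv {f : ℝ → ℝ} (hf : ContDiff ℝ ((⊤ : ℕ∞) : WithTop ℕ∞) f) :
    ContDiff ℝ ((⊤ : ℕ∞) : WithTop ℕ∞) (deriv f) :=
  (contDiff_infty_iff_deriv.mp hf).2

private lemma dlin_pt (f g : ℝ → ℝ) (hf : ContDiff ℝ ((⊤ : ℕ∞) : WithTop ℕ∞) f)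
    (hg : ContDiff ℝ ((⊤ : ℕ∞) : WithTop ℕ∞) g) (s x : ℝ) :
    deriv (fun y => f y + s * g y) x = deriv f x + s * deriv g x := by
  rw [deriv_fun_add (infDiff hf x) ((infDiff hg x).const_mul s),
    deriv_const_mul s (infDiff hg x)]

private lemma dlinF (f g : ℝ → ℝ) (hf : ContDiff ℝ ((⊤ : ℕ∞) : WithTop ℕ∞) f)
    (hg : ContDiff ℝ ((⊤ : ℕ∞) : WithTop ℕ∞) g) (s : ℝ) :
    deriv (fun y => f y + s * g y) = fun y => deriv f y + s * deriv g y :=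
  funext fun x => dlin_pt f g hf hg s x

private lemma dlin2_pt (f g : ℝ → ℝ) (hf : ContDiff ℝ ((⊤ : ℕ∞) : WithTop ℕ∞) f)
    (hg : ContDiff ℝ ((⊤ : ℕ∞) : WithTop ℕ∞) g) (s x : ℝ) :
    deriv (deriv (fun y => f y + s * g y)) x
      = deriv (deriv f) x + s * deriv (deriv g) x := by
  rw [dlinF f g hf hg s]
  exact dlin_pt (deriv f) (deriv g) (infDeriv hf) (infDeriv hg) s x

private lemma deriv_cubic (c0 c1 c2 c3 : ℝ) :
    deriv (fun s : ℝ => c0 + c1 * s + c2 * s ^ 2 + c3 * s ^ 3) 0 = c1 := by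
  have h : HasDerivAt (fun s : ℝ => c0 + c1 * s + c2 * s ^ 2 + c3 * s ^ 3)
      (0 + c1 * 1 + c2 * (↑(2:ℕ) * (0:ℝ) ^ (2 - 1)) + c3 * (↑(3:ℕ) * (0:ℝ) ^ (3 - 1))) 0 :=
    (((hasDerivAt_const (0:ℝ) c0).add ((hasDerivAt_id (0:ℝ)).const_mul c1)).add
        ((hasDerivAt_pow 2 (0:ℝ)).const_mul c2)).add ((hasDerivAt_pow 3 (0:ℝ)).const_mul c3)
  rw [h.deriv]
  norm_num

/-- The flows of systems (2.2) and (2.3) commute: the commutator bracket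
`[P,Q] = X_P(Q) − X_Q(P)` vanishes identically; the evolutionary vector
field action `X_R(S)` is expressed as the Gateaux derivative of `S` in the
direction `R`. -/
theorem flows_commute_22_23 (u v : ℝ → ℝ)
    (hu : ContDiff ℝ (⊤ : ℕ∞) u) (hv : ContDiff ℝ (⊤ : ℕ∞) v) :
    ∀ x : ℝ,
      (deriv (fun s => Q1 (fun y => u y + s * P1 u v y)
            (fun y => v y + s * P2 u v y) x) 0
        - deriv (fun s => P1 (fun y => u y + s * Q1 u v y)
            (fun y => v y + s * Q2 u v y) x) 0 = 0)
      ∧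
      (deriv (fun s => Q2 (fun y => u y + s * P1 u v y)
            (fun y => v y + s * P2 u v y) x) 0
        - deriv (fun s => P2 (fun y => u y + s * Q1 u v y)
            (fun y => v y + s * Q2 u v y) x) 0 = 0) := by
  intro x
  have hus : ContDiff ℝ ((⊤ : ℕ∞) : WithTop ℕ∞) u := hu.of_le (by simp)
  have hvs : ContDiff ℝ ((⊤ : ℕ∞) : WithTop ℕ∞) v := hv.of_le (by simp)
  have hu1s := infDeriv hus
  have hu2s := infDeriv hu1s
  have hu3s := infDeriv hu2s
  have hv1s := infDeriv hvs
  have hv2s := infDeriv hv1s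
  have hv3s := infDeriv hv2s
  have hu0 : Differentiable ℝ u := infDiff hus
  have hu1 : Differentiable ℝ (deriv u) := infDiff hu1s
  have hu2 : Differentiable ℝ (deriv (deriv u)) := infDiff hu2s
  have hu3 : Differentiable ℝ (deriv (deriv (deriv u))) := infDiff hu3s
  have hv0 : Differentiable ℝ v := infDiff hvs
  have hv1 : Differentiable ℝ (deriv v) := infDiff hv1s
  have hv2 : Differentiable ℝ (deriv (deriv v)) := infDiff hv2s
  have hv3 : Differentiable ℝ (deriv (deriv (deriv v))) := infDiff hv3s
  have hP1s : ContDiff ℝ ((⊤ : ℕ∞) : WithTop ℕ∞) (P1 u v) := by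
    exact (hv2s.add (hvs.mul hu1s)).add (hus.mul hv1s)
  have hP2s : ContDiff ℝ ((⊤ : ℕ∞) : WithTop ℕ∞) (P2 u v) := by
    exact ((hus.mul (hvs.pow 2)).neg).sub (hvs.mul hv1s)
  have hQ1s : ContDiff ℝ ((⊤ : ℕ∞) : WithTop ℕ∞) (Q1 u v) := by
    exact hu2s.add ((contDiff_const.mul hus).mul hu1s)
  have hQ2s : ContDiff ℝ ((⊤ : ℕ∞) : WithTop ℕ∞) (Q2 u v) := by
    exact hv2s.add ((contDiff_const.mul hus).mul hv1s)
  have hA1 : ∀ t, deriv (P1 u v) t = u t * (deriv (deriv (v))) t + (2 : ℝ) * (deriv (u)) t * (deriv (v)) t + (deriv (deriv (u))) t * v t + (deriv (deriv (deriv (v)))) t := by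
    intro t
    unfold P1
    simp (disch := fun_prop) only [deriv_fun_add, deriv_fun_sub, deriv_fun_mul, deriv_const_mul, deriv.fun_neg, deriv_fun_pow, deriv_const']
    first
    | ring
    | (push_cast; ring)
    | (norm_num; ring)
  have hA1F : deriv (P1 u v) = fun t => u t * (deriv (deriv (v))) t + (2 : ℝ) * (deriv (u)) t * (deriv (v)) t + (deriv (deriv (u))) t * v t + (deriv (deriv (deriv (v)))) t := funext hA1
  have hA2 : ∀ t, deriv (deriv (P1 u v)) t = u t * (deriv (deriv (deriv (v)))) t + (3 : ℝ) * (deriv (u)) t * (deriv (deriv (v))) t + (3 : ℝ) * (deriv (deriv (u))) t * (deriv (v)) t + (deriv (deriv (deriv (u)))) t * v t + (deriv (deriv (deriv (deriv (v))))) t := by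
    intro t
    rw [hA1F]
    simp (disch := fun_prop) only [deriv_fun_add, deriv_fun_sub, deriv_fun_mul, deriv_const_mul, deriv.fun_neg, deriv_fun_pow, deriv_const']
    first
    | ring
    | (push_cast; ring)
    | (norm_num; ring)
  have hB1 : ∀ t, deriv (P2 u v) t = (-2 : ℝ) * u t * v t * (deriv (v)) t + (-1 : ℝ) * (deriv (u)) t * v t * v t + (-1 : ℝ) * v t * (deriv (deriv (v))) t + (-1 : ℝ) * (deriv (v)) t * (deriv (v)) t := by
    intro t
    unfold P2
    simp (disch := fun_prop) only [deriv_fun_add, deriv_fun_sub, deriv_fun_mul, deriv_const_mul, deriv.fun_neg, deriv_fun_pow, deriv_const']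
    first
    | ring
    | (push_cast; ring)
    | (norm_num; ring)
  have hB1F : deriv (P2 u v) = fun t => (-2 : ℝ) * u t * v t * (deriv (v)) t + (-1 : ℝ) * (deriv (u)) t * v t * v t + (-1 : ℝ) * v t * (deriv (deriv (v))) t + (-1 : ℝ) * (deriv (v)) t * (deriv (v)) t := funext hB1
  have hB2 : ∀ t, deriv (deriv (P2 u v)) t = (-2 : ℝ) * u t * v t * (deriv (deriv (v))) t + (-2 : ℝ) * u t * (deriv (v)) t * (deriv (v)) t + (-4 : ℝ) * (deriv (u)) t * v t * (deriv (v)) t + (-1 : ℝ) * (deriv (deriv (u))) t * v t * v t + (-1 : ℝ) * v t * (deriv (deriv (deriv (v)))) t + (-3 : ℝ) * (deriv (v)) t * (deriv (deriv (v))) t := by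
    intro t
    rw [hB1F]
    simp (disch := fun_prop) only [deriv_fun_add, deriv_fun_sub, deriv_fun_mul, deriv_const_mul, deriv.fun_neg, deriv_fun_pow, deriv_const']
    first
    | ring
    | (push_cast; ring)
    | (norm_num; ring)
  have hC1 : ∀ t, deriv (Q1 u v) t = (2 : ℝ) * u t * (deriv (deriv (u))) t + (2 : ℝ) * (deriv (u)) t * (deriv (u)) t + (deriv (deriv (deriv (u)))) t := by
    intro t
    unfold Q1
    simp (disch := fun_prop) only [deriv_fun_add, deriv_fun_sub, deriv_fun_mul, deriv_const_mul, deriv.fun_neg, deriv_fun_pow, deriv_const']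
    first
    | ring
    | (push_cast; ring)
    | (norm_num; ring)
  have hC1F : deriv (Q1 u v) = fun t => (2 : ℝ) * u t * (deriv (deriv (u))) t + (2 : ℝ) * (deriv (u)) t * (deriv (u)) t + (deriv (deriv (deriv (u)))) t := funext hC1
  have hC2 : ∀ t, deriv (deriv (Q1 u v)) t = (2 : ℝ) * u t * (deriv (deriv (deriv (u)))) t + (6 : ℝ) * (deriv (u)) t * (deriv (deriv (u))) t + (deriv (deriv (deriv (deriv (u))))) t := by
    intro t
    rw [hC1F]
    simp (disch := fun_prop) only [deriv_fun_add, deriv_fun_sub, deriv_fun_mul, deriv_const_mul, deriv.fun_neg, deriv_fun_pow, deriv_const']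
    first
    | ring
    | (push_cast; ring)
    | (norm_num; ring)
  have hD1 : ∀ t, deriv (Q2 u v) t = (2 : ℝ) * u t * (deriv (deriv (v))) t + (2 : ℝ) * (deriv (u)) t * (deriv (v)) t + (deriv (deriv (deriv (v)))) t := by
    intro t
    unfold Q2
    simp (disch := fun_prop) only [deriv_fun_add, deriv_fun_sub, deriv_fun_mul, deriv_const_mul, deriv.fun_neg, deriv_fun_pow, deriv_const']
    first
    | ring
    | (push_cast; ring)
    | (norm_num; ring)
  have hD1F : deriv (Q2 u v) = fun t => (2 : ℝ) * u t * (deriv (deriv (v))) t + (2 : ℝ) * (deriv (u)) t * (deriv (v)) t + (deriv (deriv (deriv (v)))) t := funext hD1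
  have hD2 : ∀ t, deriv (deriv (Q2 u v)) t = (2 : ℝ) * u t * (deriv (deriv (deriv (v)))) t + (4 : ℝ) * (deriv (u)) t * (deriv (deriv (v))) t + (2 : ℝ) * (deriv (deriv (u))) t * (deriv (v)) t + (deriv (deriv (deriv (deriv (v))))) t := by
    intro t
    rw [hD1F]
    simp (disch := fun_prop) only [deriv_fun_add, deriv_fun_sub, deriv_fun_mul, deriv_const_mul, deriv.fun_neg, deriv_fun_pow, deriv_const']
    first
    | ring
    | (push_cast; ring)
    | (norm_num; ring)
  have hf1 : deriv (fun s => Q1 (fun y => u y + s * P1 u v y) (fun y => v y + s * P2 u v y) x) 0 = deriv (deriv (P1 u v)) x + (2 : ℝ) * u x * deriv (P1 u v) x + (2 : ℝ) * (deriv (u)) x * P1 u v x := by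
    have e : (fun s : ℝ => Q1 (fun y => u y + s * P1 u v y) (fun y => v y + s * P2 u v y) x) = fun s : ℝ => ((2 : ℝ) * u x * (deriv (u)) x + (deriv (deriv (u))) x) + (deriv (deriv (P1 u v)) x + (2 : ℝ) * u x * deriv (P1 u v) x + (2 : ℝ) * (deriv (u)) x * P1 u v x) * s + ((2 : ℝ) * P1 u v x * deriv (P1 u v) x) * s ^ 2 + ((0 : ℝ)) * s ^ 3 := by
      funext s
      simp only [Q1]
      rw [dlin2_pt u (P1 u v) hus hP1s s x, dlin_pt u (P1 u v) hus hP1s s x]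
      ring
    rw [e, deriv_cubic]
  have hg1 : deriv (fun s => P1 (fun y => u y + s * Q1 u v y) (fun y => v y + s * Q2 u v y) x) 0 = deriv (deriv (Q2 u v)) x + u x * deriv (Q2 u v) x + (deriv (u)) x * Q2 u v x + v x * deriv (Q1 u v) x + (deriv (v)) x * Q1 u v x := by
    have e : (fun s : ℝ => P1 (fun y => u y + s * Q1 u v y) (fun y => v y + s * Q2 u v y) x) = fun s : ℝ => (u x * (deriv (v)) x + (deriv (u)) x * v x + (deriv (deriv (v))) x) + (deriv (deriv (Q2 u v)) x + u x * deriv (Q2 u v) x + (deriv (u)) x * Q2 u v x + v x * deriv (Q1 u v) x + (deriv (v)) x * Q1 u v x) * s + (Q1 u v x * deriv (Q2 u v) x + deriv (Q1 u v) x * Q2 u v x) * s ^ 2 + ((0 : ℝ)) * s ^ 3 := by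
      funext s
      simp only [P1]
      rw [dlin2_pt v (Q2 u v) hvs hQ2s s x, dlin_pt u (Q1 u v) hus hQ1s s x, dlin_pt v (Q2 u v) hvs hQ2s s x]
      ring
    rw [e, deriv_cubic]
  have hf2 : deriv (fun s => Q2 (fun y => u y + s * P1 u v y) (fun y => v y + s * P2 u v y) x) 0 = deriv (deriv (P2 u v)) x + (2 : ℝ) * u x * deriv (P2 u v) x + (2 : ℝ) * (deriv (v)) x * P1 u v x := by
    have e : (fun s : ℝ => Q2 (fun y => u y + s * P1 u v y) (fun y => v y + s * P2 u v y) x) = fun s : ℝ => ((2 : ℝ) * u x * (deriv (v)) x + (deriv (deriv (v))) x) + (deriv (deriv (P2 u v)) x + (2 : ℝ) * u x * deriv (P2 u v) x + (2 : ℝ) * (deriv (v)) x * P1 u v x) * s + ((2 : ℝ) * P1 u v x * deriv (P2 u v) x) * s ^ 2 + ((0 : ℝ)) * s ^ 3 := by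
      funext s
      simp only [Q2]
      rw [dlin2_pt v (P2 u v) hvs hP2s s x, dlin_pt v (P2 u v) hvs hP2s s x]
      ring
    rw [e, deriv_cubic]
  have hg2 : deriv (fun s => P2 (fun y => u y + s * Q1 u v y) (fun y => v y + s * Q2 u v y) x) 0 = (-2 : ℝ) * u x * v x * Q2 u v x + (-1 : ℝ) * v x * deriv (Q2 u v) x + (-1 : ℝ) * v x * v x * Q1 u v x + (-1 : ℝ) * (deriv (v)) x * Q2 u v x := by
    have e : (fun s : ℝ => P2 (fun y => u y + s * Q1 u v y) (fun y => v y + s * Q2 u v y) x) = fun s : ℝ => ((-1 : ℝ) * u x * v x * v x + (-1 : ℝ) * v x * (deriv (v)) x) + ((-2 : ℝ) * u x * v x * Q2 u v x + (-1 : ℝ) * v x * deriv (Q2 u v) x + (-1 : ℝ) * v x * v x * Q1 u v x + (-1 : ℝ) * (deriv (v)) x * Q2 u v x) * s + ((-1 : ℝ) * Q2 u v x * deriv (Q2 u v) x + (-1 : ℝ) * u x * Q2 u v x * Q2 u v x + (-2 : ℝ) * v x * Q1 u v x * Q2 u v x) * s ^ 2 + ((-1 : ℝ) * Q1 u v x *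 Q2 u v x * Q2 u v x) * s ^ 3 := by
      funext s
      simp only [P2]
      rw [dlin_pt v (Q2 u v) hvs hQ2s s x]
      ring
    rw [e, deriv_cubic]
  constructor
  · rw [hf1, hg1, hA1 x, hA2 x, hC1 x, hD1 x, hD2 x]
    simp only [P1, Q1, Q2]
    ring
  · rw [hf2, hg2, hB1 x, hB2 x, hD1 x]
    simp only [P1, P2, Q1, Q2]
    ring
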